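/- arXiv:1206.3172 — 5 statements merged into one kernel-verified Lean document; each statement's English description precedes it below -/
import Mathlib

section
/- Fix μ > 10. Let (w_k) be a sequence of points in the open unit disc ordered so that |w_k| ≤ |w_{k+1}|, satisfying (a) 1 - |w_1| ≤ 1/μ, and (b) there exist N > 0 and C₀ < 1 with (1 - |w_{k+N}|)/(1 - |w_k|) ≤ C₀ for all k. Then there exist a nondecreasing sequence of positive integers n_k tending to infinity and a constant K depending only on C₀ and N such that ∑_k 2^{n_k}(1 - |w_k|) ≤ K/μ and ∑_k 2^{-2n_k}(1 - |w_k|)^{-1} ≤ μ. -/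
open Real Filter

private lemma natdiv_bound {N : ℕ} (hN : 0 < N) (k : ℕ) :
    (k : ℝ) / (N : ℝ) - 1 ≤ ((k / N : ℕ) : ℝ) := by
  have hNR : (0:ℝ) < (N:ℝ) := by exact_mod_cast hN
  have h1 : k < N * (k / N) + N := by
    have h2 := Nat.div_add_mod k N
    have h3 := Nat.mod_lt k hN
    omega
  have h2 : (k:ℝ) < (N:ℝ) * ((k / N : ℕ):ℝ) + N := by exact_mod_cast h1
  rw [sub_le_iff_le_add, div_le_iff₀ hNR]
  nlinarith

private lemma geo_sum {f : ℕ → ℝ} {c u : ℝ} (hc : 0 ≤ c) (hu0 : 0 < u) (hu1 : u < 1)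
    {N : ℕ} (hN : 0 < N) (h0 : ∀ k, 0 ≤ f k)
    (hle : ∀ k, f k ≤ c * u ^ (k / N)) :
    Summable f ∧ ∑' k, f k ≤ c * (u⁻¹ * (1 - u ^ ((N:ℝ)⁻¹))⁻¹) := by
  set v := u ^ ((N:ℝ)⁻¹) with hv
  have hv0 : 0 < v := Real.rpow_pos_of_pos hu0 _
  have hv1 : v < 1 := Real.rpow_lt_one hu0.le hu1 (by positivity)
  have key : ∀ k : ℕ, u ^ (k / N) ≤ u⁻¹ * v ^ k := by
    intro k
    have h1 : u ^ (k / N) = u ^ (((k / N : ℕ) : ℝ)) := (Real.rpow_natCast u _).symm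
    have h2 : u⁻¹ * v ^ k = u ^ ((k:ℝ) / N - 1) := by
      rw [hv, ← Real.rpow_natCast (u ^ ((N:ℝ)⁻¹)) k, ← Real.rpow_mul hu0.le,
        ← Real.rpow_neg_one u, ← Real.rpow_add hu0]
      ring_nf
    rw [h1, h2]
    exact Real.rpow_le_rpow_of_exponent_ge hu0 hu1.le (natdiv_bound hN k)
  have hfle : ∀ k, f k ≤ c * u⁻¹ * v ^ k := by
    intro k
    have h3 := mul_le_mul_of_nonneg_left (key k) hc
    calc f k ≤ c * u ^ (k / N) := hle k
      _ ≤ c * (u⁻¹ * v ^ k) := h3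
      _ = c * u⁻¹ * v ^ k := by ring
  have hgeo : Summable (fun k : ℕ => c * u⁻¹ * v ^ k) :=
    (summable_geometric_of_lt_one hv0.le hv1).mul_left _
  have hs : Summable f := Summable.of_nonneg_of_le h0 hfle hgeo
  refine ⟨hs, ?_⟩
  calc ∑' k, f k ≤ ∑' k, c * u⁻¹ * v ^ k := Summable.tsum_le_tsum hfle hs hgeo
    _ = c * u⁻¹ * ∑' k : ℕ, v ^ k := tsum_mul_left
    _ = c * u⁻¹ * (1 - v)⁻¹ := by rw [tsum_geometric_of_lt_one hv0.le hv1]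
    _ = c * (u⁻¹ * (1 - v)⁻¹) := by ring

set_option maxHeartbeats 1000000 in
/-- Lemma 1: for an exponentially decaying sequence in the disc there exist integers `n k`
making the two stated sums small resp. bounded by `μ`, with a constant depending only
on `C₀` and `N`. -/
theorem exists_nk_sums_bounded
    (N : ℕ) (hN : 0 < N) (C₀ : ℝ) (hC₀ : C₀ < 1) :
    ∃ K : ℝ, 0 < K ∧
      ∀ (μ : ℝ), 10 < μ →
      ∀ (w : ℕ → ℂ),
        (∀ k, ‖w k‖ < 1) →
        (∀ k, ‖w k‖ ≤ ‖w (k + 1)‖) →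
        1 - ‖w 0‖ ≤ 1 / μ →
        (∀ k, (1 - ‖w (k + N)‖) / (1 - ‖w k‖) ≤ C₀) →
        ∃ n : ℕ → ℕ,
          (∀ k, 0 < n k) ∧ Monotone n ∧
          Filter.Tendsto n Filter.atTop Filter.atTop ∧
          Summable (fun k => (2:ℝ) ^ (n k) * (1 - ‖w k‖)) ∧
          (∑' k, (2:ℝ) ^ (n k) * (1 - ‖w k‖)) ≤ K / μ ∧
          Summable (fun k => (2:ℝ) ^ (-(2 * (n k : ℤ))) * (1 - ‖w k‖)⁻¹) ∧
          (∑' k, (2:ℝ) ^ (-(2 * (n k : ℤ))) * (1 - ‖w k‖)⁻¹) ≤ μ := by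
  -- constants depending only on C₀ and N
  set C₁ : ℝ := max C₀ (1/2) with hC₁def
  have hC₁0 : (0:ℝ) < C₁ := lt_of_lt_of_le (by norm_num) (le_max_right _ _)
  have hC₁1 : C₁ < 1 := max_lt hC₀ (by norm_num)
  set s : ℝ := Real.sqrt C₁ with hsdef
  have hs0 : 0 < s := Real.sqrt_pos.mpr hC₁0
  have hs2 : s ^ 2 = C₁ := Real.sq_sqrt hC₁0.le
  have hs1 : s < 1 := by
    have h1 : s < Real.sqrt 1 := Real.sqrt_lt_sqrt hC₁0.le hC₁1
    simpa using h1
  set t : ℝ := (1 + s) / 2 with htdef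
  have ht0 : 0 < t := by rw [htdef]; linarith
  have hst : s < t := by rw [htdef]; linarith
  have ht1 : t < 1 := by rw [htdef]; linarith
  set u : ℝ := s / t with hudef
  have hu0 : 0 < u := div_pos hs0 ht0
  have hu1 : u < 1 := (div_lt_one ht0).mpr hst
  have ht20 : (0:ℝ) < t ^ 2 := pow_pos ht0 2
  have ht21 : t ^ 2 < 1 := by nlinarith
  set St : ℝ := (t ^ 2)⁻¹ * (1 - (t ^ 2) ^ ((N:ℝ)⁻¹))⁻¹ with hStdef
  have ht2rpow : (t ^ 2) ^ ((N:ℝ)⁻¹) < 1 := Real.rpow_lt_one ht20.le ht21 (by positivity)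
  have hSt0 : 0 < St := by
    rw [hStdef]
    exact mul_pos (inv_pos.mpr ht20) (inv_pos.mpr (by linarith))
  set ε : ℝ := min (1/2) (Real.sqrt St)⁻¹ with hεdef
  have hε0 : 0 < ε := lt_min (by norm_num) (inv_pos.mpr (Real.sqrt_pos.mpr hSt0))
  have hεhalf : ε ≤ 1/2 := min_le_left _ _
  have hεSt : ε ^ 2 * St ≤ 1 := by
    have h1 : ε ≤ (Real.sqrt St)⁻¹ := min_le_right _ _
    have h2 : ε ^ 2 ≤ ((Real.sqrt St)⁻¹) ^ 2 := pow_le_pow_left₀ hε0.le h1 2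
    have h3 : ((Real.sqrt St)⁻¹) ^ 2 = St⁻¹ := by
      rw [inv_pow, Real.sq_sqrt hSt0.le]
    calc ε ^ 2 * St ≤ St⁻¹ * St := by
          apply mul_le_mul_of_nonneg_right _ hSt0.le; rw [← h3]; exact h2
      _ = 1 := inv_mul_cancel₀ (ne_of_gt hSt0)
  set K : ℝ := (2 / ε) * (u⁻¹ * (1 - u ^ ((N:ℝ)⁻¹))⁻¹) with hKdef
  have hu1' : u ^ ((N:ℝ)⁻¹) < 1 := Real.rpow_lt_one hu0.le hu1 (by positivity)
  have hK0 : 0 < K := by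
    rw [hKdef]
    exact mul_pos (div_pos (by norm_num) hε0)
      (mul_pos (inv_pos.mpr hu0) (inv_pos.mpr (by linarith)))
  refine ⟨K, hK0, ?_⟩
  intro μ hμ w hw1 hwmono hw0 hdecay
  have hμ0 : (0:ℝ) < μ := by linarith
  set a : ℕ → ℝ := fun k => 1 - ‖w k‖ with ha
  have ha0 : ∀ k, 0 < a k := fun k => by
    have := hw1 k; simp only [ha]; linarith
  have haanti : Antitone a := by
    apply antitone_nat_of_succ_le
    intro k
    have := hwmono k
    simp only [ha]; linarith
  have ha0μ : a 0 ≤ 1 / μ := hw0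
  have hstep : ∀ k, a (k + N) ≤ C₁ * a k := by
    intro k
    have h := (hdecay k).trans (le_max_left C₀ (1/2))
    have h2 := (div_le_iff₀ (ha0 k)).mp h
    show 1 - ‖w (k + N)‖ ≤ C₁ * (1 - ‖w k‖)
    rw [hC₁def]
    exact h2
  have hgeoa : ∀ k, a k ≤ C₁ ^ (k / N) * (1 / μ) := by
    intro k
    induction k using Nat.strong_induction_on with
    | _ k ih =>
      by_cases hk : k < N
      · rw [Nat.div_eq_of_lt hk]
        simpa using (haanti (Nat.zero_le k)).trans ha0μ
      · push_neg at hk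
        set m := k - N with hm
        have hkm : k = m + N := by omega
        have hmk : m < k := by omega
        have h1 : a k ≤ C₁ * a m := by rw [hkm]; exact hstep m
        have h2 : a m ≤ C₁ ^ (m / N) * (1 / μ) := ih m hmk
        have h3 : k / N = m / N + 1 := by rw [hkm, Nat.add_div_right _ hN]
        rw [h3, pow_succ]
        calc a k ≤ C₁ * (C₁ ^ (m / N) * (1 / μ)) :=
              h1.trans (mul_le_mul_of_nonneg_left h2 hC₁0.le)
          _ = C₁ ^ (m / N) * C₁ * (1 / μ) := by ring
  -- the auxiliary sequence x
  set x : ℕ → ℝ := fun k => ε * Real.sqrt (a k * μ) * t ^ (k / N) with hx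
  have haμ0 : ∀ k, 0 < a k * μ := fun k => mul_pos (ha0 k) hμ0
  have hx0 : ∀ k, 0 < x k := by
    intro k
    simp only [hx]
    exact mul_pos (mul_pos hε0 (Real.sqrt_pos.mpr (haμ0 k))) (pow_pos ht0 _)
  have haμ1 : ∀ k, a k * μ ≤ 1 := by
    intro k
    have h1 : a k ≤ 1 / μ := (haanti (Nat.zero_le k)).trans ha0μ
    calc a k * μ ≤ (1/μ) * μ := mul_le_mul_of_nonneg_right h1 hμ0.le
      _ = 1 := by field_simp
  have hsqrt1 : ∀ k, Real.sqrt (a k * μ) ≤ 1 := by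
    intro k
    have h1 := Real.sqrt_le_sqrt (haμ1 k)
    simpa using h1
  have hxanti : Antitone x := by
    intro j k hjk
    simp only [hx]
    have h1 : Real.sqrt (a k * μ) ≤ Real.sqrt (a j * μ) :=
      Real.sqrt_le_sqrt (mul_le_mul_of_nonneg_right (haanti hjk) hμ0.le)
    have h2 : t ^ (k / N) ≤ t ^ (j / N) :=
      pow_le_pow_of_le_one ht0.le ht1.le (Nat.div_le_div_right hjk)
    exact mul_le_mul (mul_le_mul_of_nonneg_left h1 hε0.le) h2
      (pow_nonneg ht0.le _) (mul_nonneg hε0.le (Real.sqrt_nonneg _))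
  have hxhalf : ∀ k, x k ≤ 1/2 := by
    intro k
    simp only [hx]
    calc ε * Real.sqrt (a k * μ) * t ^ (k / N) ≤ ε * 1 * 1 := by
          apply mul_le_mul (mul_le_mul_of_nonneg_left (hsqrt1 k) hε0.le)
            (pow_le_one₀ ht0.le ht1.le) (pow_nonneg ht0.le _)
            (by rw [mul_one]; exact hε0.le)
      _ = ε := by ring
      _ ≤ 1/2 := hεhalf
  have hsqs : ∀ k, Real.sqrt (a k * μ) ≤ s ^ (k / N) := by
    intro k
    have h1 : a k * μ ≤ C₁ ^ (k / N) := by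
      have h2 := mul_le_mul_of_nonneg_right (hgeoa k) hμ0.le
      calc a k * μ ≤ C₁ ^ (k / N) * (1/μ) * μ := h2
        _ = C₁ ^ (k / N) := by field_simp
    have h2 : (s ^ (k / N)) ^ 2 = C₁ ^ (k / N) := by
      rw [← pow_mul, mul_comm, pow_mul, hs2]
    calc Real.sqrt (a k * μ) ≤ Real.sqrt (C₁ ^ (k / N)) := Real.sqrt_le_sqrt h1
      _ = s ^ (k / N) := by rw [← h2, Real.sqrt_sq (pow_nonneg hs0.le _)]
  -- the integers n
  set n : ℕ → ℕ := fun k => ⌈Real.logb 2 (x k)⁻¹⌉₊ with hn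
  have hinv2 : ∀ k, 2 ≤ (x k)⁻¹ := by
    intro k
    have h1 := one_div_le_one_div_of_le (hx0 k) (hxhalf k)
    rw [one_div, one_div] at h1
    norm_num at h1
    linarith
  have hlogb1 : ∀ k, 1 ≤ Real.logb 2 (x k)⁻¹ := by
    intro k
    have h2 : Real.logb 2 2 ≤ Real.logb 2 (x k)⁻¹ :=
      (Real.logb_le_logb (by norm_num) (by norm_num) (inv_pos.mpr (hx0 k))).mpr (hinv2 k)
    rwa [Real.logb_self_eq_one (by norm_num : (1:ℝ) < 2)] at h2
  have hnpos : ∀ k, 0 < n k := by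
    intro k
    exact Nat.ceil_pos.mpr (lt_of_lt_of_le one_pos (hlogb1 k))
  have hnmono : Monotone n := by
    intro j k hjk
    apply Nat.ceil_le_ceil
    apply (Real.logb_le_logb (by norm_num) (inv_pos.mpr (hx0 j)) (inv_pos.mpr (hx0 k))).mpr
    exact inv_anti₀ (hx0 k) (hxanti hjk)
  have hnlower : ∀ k, Real.logb 2 (x k)⁻¹ ≤ (n k : ℝ) := fun k => Nat.le_ceil _
  have hnupper : ∀ k, (n k : ℝ) < Real.logb 2 (x k)⁻¹ + 1 :=
    fun k => Nat.ceil_lt_add_one (le_trans zero_le_one (hlogb1 k))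
  have hpow_low : ∀ k, ((2:ℝ) ^ (n k))⁻¹ ≤ x k := by
    intro k
    have h1 : (x k)⁻¹ ≤ (2:ℝ) ^ (n k) := by
      have h2 : (x k)⁻¹ = (2:ℝ) ^ (Real.logb 2 (x k)⁻¹) :=
        (Real.rpow_logb (by norm_num) (by norm_num) (inv_pos.mpr (hx0 k))).symm
      rw [h2, ← Real.rpow_natCast 2 (n k)]
      exact Real.rpow_le_rpow_of_exponent_le one_le_two (hnlower k)
    have h3 := inv_anti₀ (inv_pos.mpr (hx0 k)) h1
    rwa [inv_inv] at h3
  have hpow_up : ∀ k, (2:ℝ) ^ (n k) ≤ 2 * (x k)⁻¹ := by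
    intro k
    have h2 : ((2:ℝ) ^ (n k) : ℝ) = (2:ℝ) ^ ((n k : ℝ)) := (Real.rpow_natCast 2 (n k)).symm
    rw [h2]
    calc (2:ℝ) ^ ((n k : ℝ)) ≤ (2:ℝ) ^ (Real.logb 2 (x k)⁻¹ + 1) :=
          Real.rpow_le_rpow_of_exponent_le one_le_two (hnupper k).le
      _ = (2:ℝ) ^ (Real.logb 2 (x k)⁻¹) * 2 := by
          rw [Real.rpow_add (by norm_num), Real.rpow_one]
      _ = (x k)⁻¹ * 2 := by
          rw [Real.rpow_logb (by norm_num) (by norm_num) (inv_pos.mpr (hx0 k))]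
      _ = 2 * (x k)⁻¹ := by ring
  -- tendsto
  have hdivtop : Tendsto (fun k : ℕ => k / N) atTop atTop := by
    apply tendsto_atTop_atTop.mpr
    intro b
    exact ⟨b * N, fun k hk => (Nat.le_div_iff_mul_le hN).mpr hk⟩
  have hntop : Tendsto n atTop atTop := by
    rw [← tendsto_natCast_atTop_iff (R := ℝ)]
    have hlt : 0 < Real.logb 2 t⁻¹ :=
      Real.logb_pos (by norm_num) ((one_lt_inv₀ ht0).mpr ht1)
    have h1 : Tendsto (fun k : ℕ => ((k / N : ℕ) : ℝ) * Real.logb 2 t⁻¹) atTop atTop :=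
      (tendsto_natCast_atTop_iff.mpr hdivtop).atTop_mul_const hlt
    have h2 : ∀ k, ((k / N : ℕ) : ℝ) * Real.logb 2 t⁻¹ ≤ (n k : ℝ) := by
      intro k
      have hxt : x k ≤ t ^ (k / N) := by
        simp only [hx]
        calc ε * Real.sqrt (a k * μ) * t ^ (k / N) ≤ 1 * 1 * t ^ (k / N) := by
              apply mul_le_mul_of_nonneg_right _ (pow_nonneg ht0.le _)
              exact mul_le_mul (by linarith [hεhalf]) (hsqrt1 k)
                (Real.sqrt_nonneg _) (by norm_num)
          _ = t ^ (k / N) := by ring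
      have h3 : Real.logb 2 (t ^ (k / N))⁻¹ ≤ Real.logb 2 (x k)⁻¹ := by
        apply (Real.logb_le_logb (by norm_num) (inv_pos.mpr (pow_pos ht0 _))
          (inv_pos.mpr (hx0 k))).mpr
        exact inv_anti₀ (hx0 k) hxt
      have h4 : Real.logb 2 (t ^ (k / N))⁻¹ = ((k / N : ℕ) : ℝ) * Real.logb 2 t⁻¹ := by
        rw [Real.logb_inv, Real.logb_pow, Real.logb_inv]
        ring
      calc ((k / N : ℕ) : ℝ) * Real.logb 2 t⁻¹ = Real.logb 2 (t ^ (k / N))⁻¹ := h4.symm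
        _ ≤ Real.logb 2 (x k)⁻¹ := h3
        _ ≤ (n k : ℝ) := hnlower k
    exact tendsto_atTop_mono h2 h1
  -- first sum
  have hεne : ε ≠ 0 := hε0.ne'
  have hμne : μ ≠ 0 := hμ0.ne'
  have hsum1 : ∀ k, (2:ℝ) ^ (n k) * a k ≤ (2 / (ε * μ)) * u ^ (k / N) := by
    intro k
    have h1 : (2:ℝ) ^ (n k) * a k ≤ 2 * (x k)⁻¹ * a k :=
      mul_le_mul_of_nonneg_right (hpow_up k) (ha0 k).le
    have h2 : (x k)⁻¹ * a k ≤ (1 / (ε * μ)) * u ^ (k / N) := by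
      rw [inv_mul_le_iff₀ (hx0 k)]
      have htqne : t ^ (k / N) ≠ 0 := (pow_pos ht0 _).ne'
      have hrhs : x k * ((1 / (ε * μ)) * u ^ (k / N)) =
          Real.sqrt (a k * μ) * s ^ (k / N) / μ := by
        simp only [hx, hudef, div_pow]
        field_simp
      rw [hrhs, le_div_iff₀ hμ0]
      have hy0 : (0:ℝ) ≤ Real.sqrt (a k * μ) := Real.sqrt_nonneg _
      have h5 : Real.sqrt (a k * μ) * Real.sqrt (a k * μ) ≤
          Real.sqrt (a k * μ) * s ^ (k / N) :=
        mul_le_mul_of_nonneg_left (hsqs k) hy0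
      have h6 : Real.sqrt (a k * μ) * Real.sqrt (a k * μ) = a k * μ :=
        Real.mul_self_sqrt (haμ0 k).le
      calc a k * μ = Real.sqrt (a k * μ) * Real.sqrt (a k * μ) := h6.symm
        _ ≤ Real.sqrt (a k * μ) * s ^ (k / N) := h5
    calc (2:ℝ) ^ (n k) * a k ≤ 2 * (x k)⁻¹ * a k := h1
      _ = 2 * ((x k)⁻¹ * a k) := by ring
      _ ≤ 2 * ((1 / (ε * μ)) * u ^ (k / N)) :=
          mul_le_mul_of_nonneg_left h2 (by norm_num)
      _ = (2 / (ε * μ)) * u ^ (k / N) := by ring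
  have hc1 : (0:ℝ) ≤ 2 / (ε * μ) := le_of_lt (div_pos (by norm_num) (mul_pos hε0 hμ0))
  obtain ⟨hS1, hB1⟩ := geo_sum hc1 hu0 hu1 hN
    (fun k => mul_nonneg (by positivity) (ha0 k).le) hsum1
  have hB1' : (∑' k, (2:ℝ) ^ (n k) * a k) ≤ K / μ := by
    apply hB1.trans_eq
    rw [hKdef, ← div_div, div_mul_eq_mul_div]
  -- second sum
  have hzrw : ∀ k, (2:ℝ) ^ (-(2 * (n k : ℤ))) = (((2:ℝ) ^ (n k))⁻¹) ^ 2 := by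
    intro k
    rw [zpow_neg]
    rw [show (2 * (n k : ℤ)) = ((2 * n k : ℕ) : ℤ) by push_cast; ring,
      zpow_natCast, mul_comm 2 (n k), pow_mul, inv_pow]
  have hsum2 : ∀ k, (2:ℝ) ^ (-(2 * (n k : ℤ))) * (a k)⁻¹ ≤
      (ε ^ 2 * μ) * (t ^ 2) ^ (k / N) := by
    intro k
    rw [hzrw k]
    have h1 : (((2:ℝ) ^ (n k))⁻¹) ^ 2 ≤ (x k) ^ 2 :=
      pow_le_pow_left₀ (by positivity) (hpow_low k) 2
    have h2 : (x k) ^ 2 * (a k)⁻¹ = (ε ^ 2 * μ) * (t ^ 2) ^ (k / N) := by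
      have hy : Real.sqrt (a k * μ) ^ 2 = a k * μ := Real.sq_sqrt (haμ0 k).le
      have hts : (t ^ (k / N)) ^ 2 = (t ^ 2) ^ (k / N) := by
        rw [← pow_mul, mul_comm, pow_mul]
      have hakne : a k ≠ 0 := (ha0 k).ne'
      simp only [hx, mul_pow, hy, hts]
      field_simp
    calc (((2:ℝ) ^ (n k))⁻¹) ^ 2 * (a k)⁻¹ ≤ (x k) ^ 2 * (a k)⁻¹ :=
          mul_le_mul_of_nonneg_right h1 (inv_nonneg.mpr (ha0 k).le)
      _ = (ε ^ 2 * μ) * (t ^ 2) ^ (k / N) := h2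
  have hc2 : (0:ℝ) ≤ ε ^ 2 * μ := mul_nonneg (sq_nonneg ε) hμ0.le
  obtain ⟨hS2, hB2⟩ := geo_sum hc2 ht20 ht21 hN
    (fun k => mul_nonneg (by positivity) (inv_nonneg.mpr (ha0 k).le)) hsum2
  have hB2' : (∑' k, (2:ℝ) ^ (-(2 * (n k : ℤ))) * (a k)⁻¹) ≤ μ := by
    apply hB2.trans
    have heq : ε ^ 2 * μ * ((t ^ 2)⁻¹ * (1 - (t ^ 2) ^ ((N:ℝ)⁻¹))⁻¹) = (ε ^ 2 * St) * μ := by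
      rw [hStdef]; ring
    rw [heq]
    calc (ε ^ 2 * St) * μ ≤ 1 * μ := mul_le_mul_of_nonneg_right hεSt hμ0.le
      _ = μ := one_mul μ
  simp only [ha] at hS1 hB1' hS2 hB2'
  exact ⟨n, hnpos, hnmono, hntop, hS1, hB1', hS2, hB2'⟩
end

section
/- Let (z_n) be a Blaschke sequence in the unit disc (∑(1-|z_n|) < ∞) ordered with |z_n| ≤ |z_{n+1}|, satisfying sup_k (1-|z_{k+K}|)/(1-|z_k|) = α < 1 for some integer K > 0. Then for every r with 0 < r < 1, (1/(1-r)) · ∑_{n : |z_n| ≥ r} (1 - |z_n|) ≤ K/(1-α). -/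
/-- For a Blaschke sequence with geometric decay of step `K` and ratio `α < 1`, the tail sums
of `1 - |z n|` over `|z n| ≥ r` are controlled by `K/(1-α)` times `1 - r`. -/
theorem tail_sum_le_of_geometric_decay
    (z : ℕ → ℂ)
    (hdisc : ∀ n, ‖z n‖ < 1)
    (hmono : ∀ n, ‖z n‖ ≤ ‖z (n + 1)‖)
    (hsum : Summable (fun n => 1 - ‖z n‖))
    (K : ℕ) (hK : 0 < K) (α : ℝ) (hα : α < 1)
    (hdecay : ∀ n, (1 - ‖z (n + K)‖) / (1 - ‖z n‖) ≤ α) :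
    ∀ r : ℝ, 0 < r → r < 1 →
      (1 / (1 - r)) * (∑' n : {n : ℕ | r ≤ ‖z n‖}, (1 - ‖z (n : ℕ)‖))
        ≤ K / (1 - α) := by
  intro r hr0 hr1
  have hapos : ∀ n, 0 < 1 - ‖z n‖ := fun n => sub_pos.mpr (hdisc n)
  have hαK : 0 ≤ α := le_trans (le_of_lt (div_pos (hapos (0 + K)) (hapos 0))) (hdecay 0)
  have hα1 : (0:ℝ) < 1 - α := by linarith
  have hKα : (0:ℝ) ≤ (K:ℝ) / (1 - α) := div_nonneg (Nat.cast_nonneg K) hα1.le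
  have habs : Monotone fun n => ‖z n‖ := monotone_nat_of_le_succ hmono
  have hanti : ∀ m n, m ≤ n → 1 - ‖z n‖ ≤ 1 - ‖z m‖ :=
    fun m n h => by linarith [habs h]
  have hdec : ∀ n, 1 - ‖z (n + K)‖ ≤ α * (1 - ‖z n‖) := by
    intro n
    have := (div_le_iff₀ (hapos n)).mp (hdecay n)
    linarith
  by_cases hex : ∃ n, r ≤ ‖z n‖
  · set N := Nat.find hex with hN
    have hNspec : r ≤ ‖z N‖ := Nat.find_spec hex
    have hNmin : ∀ n, r ≤ ‖z n‖ → N ≤ n := fun n hn => Nat.find_min' hex hn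
    have haN : 1 - ‖z N‖ ≤ 1 - r := by linarith
    -- key pointwise bound
    have key : ∀ m, 1 - ‖z (N + m)‖ ≤ α ^ (m / K) * (1 - ‖z N‖) := by
      intro m
      induction m using Nat.strong_induction_on with
      | _ m ih =>
        rcases lt_or_ge m K with h | h
        · rw [Nat.div_eq_of_lt h, pow_zero, one_mul]
          exact hanti N (N + m) (Nat.le_add_right _ _)
        · have hm : m - K < m := Nat.sub_lt (lt_of_lt_of_le hK h) hK
          have h1 : 1 - ‖z (N + m)‖ ≤ α * (1 - ‖z (N + (m - K))‖) := by
            have := hdec (N + (m - K))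
            rwa [add_assoc, Nat.sub_add_cancel h] at this
          have h2 := ih (m - K) hm
          have hdiv : m / K = (m - K) / K + 1 := Nat.div_eq_sub_div hK h
          calc 1 - ‖z (N + m)‖ ≤ α * (1 - ‖z (N + (m - K))‖) := h1
            _ ≤ α * (α ^ ((m - K) / K) * (1 - ‖z N‖)) :=
              mul_le_mul_of_nonneg_left h2 hαK
            _ = α ^ (m / K) * (1 - ‖z N‖) := by rw [hdiv]; ring
    -- geometric sum over m ↦ α ^ (m / K)
    haveI : NeZero K := ⟨hK.ne'⟩
    set g : ℕ → ℝ := fun m => α ^ (m / K) * (1 - ‖z N‖) with hg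
    have hFsum : Summable fun p : ℕ × Fin K => α ^ p.1 := by
      rw [summable_prod_of_nonneg (fun p => pow_nonneg hαK _)]
      constructor
      · intro j; exact summable_of_finite_support (Set.toFinite _)
      · simpa [tsum_fintype] using (summable_geometric_of_lt_one hαK hα).mul_left (K:ℝ)
    have hcomp : Summable fun m : ℕ => α ^ (m / K) := by
      have := (Nat.divModEquiv K).summable_iff.mpr hFsum
      simpa [Function.comp_def, Nat.divModEquiv] using this
    have hgsum : Summable g := hcomp.mul_right _
    have hT : ∑' m : ℕ, α ^ (m / K) = (K:ℝ) * (1 - α)⁻¹ := by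
      have h1 : ∑' m : ℕ, α ^ (m / K) = ∑' p : ℕ × Fin K, α ^ p.1 := by
        have := (Nat.divModEquiv K).tsum_eq (fun p : ℕ × Fin K => α ^ p.1)
        simpa using this
      rw [h1, Summable.tsum_prod' hFsum (fun j => summable_of_finite_support (Set.toFinite _))]
      simp only [tsum_fintype, Finset.sum_const, Finset.card_univ, Fintype.card_fin,
        nsmul_eq_mul]
      rw [tsum_mul_left, tsum_geometric_of_lt_one hαK hα]
    -- injection from the subtype into ℕ
    have hinj : Function.Injective
        (fun n : {n : ℕ | r ≤ ‖z n‖} => (n : ℕ) - N) := by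
      rintro ⟨m, hm⟩ ⟨n, hn⟩ h
      have h' : m - N = n - N := by simpa using h
      clear h
      have hm' := hNmin m hm
      have hn' := hNmin n hn
      exact Subtype.ext (show m = n by omega)
    have hle : ∀ n : {n : ℕ | r ≤ ‖z n‖},
        1 - ‖z (n : ℕ)‖ ≤ g ((n : ℕ) - N) := by
      rintro ⟨n, hn⟩
      have hn' := hNmin n hn
      have := key (n - N)
      rwa [Nat.add_sub_cancel' hn'] at this
    have hmain : (∑' n : {n : ℕ | r ≤ ‖z n‖}, (1 - ‖z (n : ℕ)‖))
        ≤ ∑' m, g m := by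
      refine Summable.tsum_le_tsum_of_inj _ hinj (fun c _ => ?_) hle (hsum.subtype _) hgsum
      exact mul_nonneg (pow_nonneg hαK _) (hapos N).le
    have hgval : ∑' m, g m ≤ (K:ℝ) / (1 - α) * (1 - r) := by
      rw [hg]
      rw [tsum_mul_right, hT]
      have : (K:ℝ) * (1 - α)⁻¹ = (K:ℝ) / (1 - α) := by rw [div_eq_mul_inv]
      rw [this]
      exact mul_le_mul_of_nonneg_left haN hKα
    have h1r : (0:ℝ) < 1 - r := by linarith
    rw [one_div, inv_mul_eq_div, div_le_iff₀ h1r]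
    calc (∑' n : {n : ℕ | r ≤ ‖z n‖}, (1 - ‖z (n : ℕ)‖))
        ≤ (K:ℝ) / (1 - α) * (1 - r) := le_trans hmain hgval
      _ = (K:ℝ) / (1 - α) * (1 - r) := rfl
  · push_neg at hex
    haveI : IsEmpty {n : ℕ | r ≤ ‖z n‖} :=
      ⟨fun n => absurd n.2 (not_le.mpr (hex n.1))⟩
    rw [tsum_empty, mul_zero]
    exact hKα
end

section
/- Let B be a Blaschke product with zero sequence (z_n). Then sup{T(r) : 0 ≤ r < 1} < ∞ if and only if B is a finite Blaschke product, where T(r) = (1/log r)·(1/2π)∫₀^{2π} log|B(re^{iθ})| dθ. -/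
/-- For a Blaschke product with zero family `z`, the logarithmic means
`T r = #{i : |z i| ≤ r} + (1/log r) ∑_{|z i| ≥ r} log |z i|` are uniformly bounded
for `0 < r < 1` iff the Blaschke product is finite, i.e. the index type is finite. -/
theorem bounded_T_iff_finite
    (ι : Type) [Countable ι] (z : ι → ℂ)
    (hdisc : ∀ i, ‖z i‖ < 1)
    (hsum : Summable (fun i => 1 - ‖z i‖)) :
    (∃ S : ℝ, ∀ r : ℝ, 0 < r → r < 1 →
        (({i : ι | ‖z i‖ ≤ r}.ncard : ℝ)
          + (1 / Real.log r) *
            ∑' i : {i : ι | r ≤ ‖z i‖}, Real.log (‖z (i : ι)‖)) ≤ S)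
      ↔ Finite ι := by
  constructor
  · rintro ⟨S, hS⟩
    by_contra hfin
    have hinf : Infinite ι := not_finite_iff_infinite.mp hfin
    obtain ⟨s, hs⟩ := Infinite.exists_subset_card_eq ι (⌈S⌉₊ + 1)
    set t : Finset ℝ := insert (1/2) (s.image (fun i => ‖z i‖)) with ht_def
    have ht : t.Nonempty := ⟨1/2, by simp [ht_def]⟩
    set r := t.max' ht with hr_def
    have hr1 : r < 1 := by
      rw [hr_def, Finset.max'_lt_iff]
      intro b hb
      simp only [ht_def, Finset.mem_insert, Finset.mem_image] at hb
      rcases hb with hb | ⟨i, _, rfl⟩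
      · rw [hb]; norm_num
      · exact hdisc i
    have hrhalf : (1/2 : ℝ) ≤ r := Finset.le_max' t _ (by simp [ht_def])
    have hr0 : 0 < r := lt_of_lt_of_le (by norm_num) hrhalf
    have hmem : ∀ i ∈ s, ‖z i‖ ≤ r := by
      intro i hi
      refine Finset.le_max' t _ ?_
      simp only [ht_def, Finset.mem_insert, Finset.mem_image]
      exact Or.inr ⟨i, hi, rfl⟩
    have hAfin : {i : ι | ‖z i‖ ≤ r}.Finite := by
      have h1 : ∀ᶠ i in Filter.cofinite, 1 - ‖z i‖ < 1 - r :=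
        hsum.tendsto_cofinite_zero.eventually (gt_mem_nhds (by linarith))
      refine (Filter.eventually_cofinite.mp h1).subset ?_
      intro i hi
      simp only [Set.mem_setOf_eq] at hi ⊢
      linarith
    have hlogr : Real.log r < 0 := Real.log_neg hr0 hr1
    have hts : ∑' i : {i : ι | r ≤ ‖z i‖}, Real.log (‖z (i : ι)‖) ≤ 0 :=
      tsum_nonpos fun i => Real.log_nonpos (norm_nonneg _) (hdisc _).le
    have h2 : 0 ≤ (1 / Real.log r) *
        ∑' i : {i : ι | r ≤ ‖z i‖}, Real.log (‖z (i : ι)‖) :=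
      by nlinarith [hts, one_div_nonpos.mpr hlogr.le]
    have hle := hS r hr0 hr1
    have hcard : s.card ≤ {i : ι | ‖z i‖ ≤ r}.ncard := by
      rw [← Set.ncard_coe_finset]
      exact Set.ncard_le_ncard (fun i hi => hmem i (by exact_mod_cast hi)) hAfin
    have hSle : (s.card : ℝ) ≤ S := by
      have := (Nat.cast_le (α := ℝ)).mpr hcard
      linarith
    rw [hs] at hSle
    push_cast at hSle
    linarith [Nat.le_ceil S]
  · intro hfin
    haveI := Fintype.ofFinite ι
    refine ⟨2 * Fintype.card ι, fun r hr0 hr1 => ?_⟩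
    have hlogr : Real.log r < 0 := Real.log_neg hr0 hr1
    have h1 : ({i : ι | ‖z i‖ ≤ r}.ncard : ℝ) ≤ Fintype.card ι := by
      have := Set.ncard_le_ncard (Set.subset_univ {i : ι | ‖z i‖ ≤ r})
        Set.finite_univ
      rw [Set.ncard_univ, Nat.card_eq_fintype_card] at this
      exact_mod_cast this
    have h2 : (1 / Real.log r) *
        ∑' i : {i : ι | r ≤ ‖z i‖}, Real.log (‖z (i : ι)‖)
        ≤ Fintype.card ι := by
      rw [tsum_fintype, Finset.mul_sum]
      calc ∑ i : {i : ι | r ≤ ‖z i‖},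
              (1 / Real.log r) * Real.log (‖z (i : ι)‖)
          ≤ ∑ _i : {i : ι | r ≤ ‖z i‖}, (1 : ℝ) := by
            refine Finset.sum_le_sum fun i _ => ?_
            have hlog_le : Real.log r ≤ Real.log (‖z (i : ι)‖) :=
              Real.log_le_log hr0 i.2
            have := mul_le_mul_of_nonpos_left hlog_le (one_div_nonpos.mpr hlogr.le)
            calc (1 / Real.log r) * Real.log (‖z (i : ι)‖)
                ≤ (1 / Real.log r) * Real.log r := this
              _ = 1 := one_div_mul_cancel hlogr.ne
        _ = (Fintype.card {i : ι | r ≤ ‖z i‖} : ℝ) := by simp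
        _ ≤ Fintype.card ι := by
            exact_mod_cast Fintype.card_le_of_injective _ Subtype.val_injective
    linarith
end

section
/- Let (z_n) be a Blaschke sequence ordered by increasing modulus with sup_n (1-|z_{n+K}|)/(1-|z_n|) = α < 1 for some integer K > 0. Then there is a constant C > 0 such that for all 1/2 ≤ r < 1, (1/log(1/r))·∑_{n : |z_n| ≥ r} log(1/|z_n|) ≤ C·K/(1-α). -/
/-- For a Blaschke sequence with geometric decay (step `K`, ratio `α < 1`), the tail sums
of `log(1/|z n|)` over `|z n| ≥ r` are bounded by `C·K/(1-α)` times `log(1/r)`,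
for `1/2 ≤ r < 1`. -/
theorem tail_log_sum_le_of_geometric_decay
    (z : ℕ → ℂ)
    (hdisc : ∀ n, ‖z n‖ < 1)
    (hmono : ∀ n, ‖z n‖ ≤ ‖z (n + 1)‖)
    (hsum : Summable (fun n => 1 - ‖z n‖))
    (K : ℕ) (hK : 0 < K) (α : ℝ) (hα : α < 1)
    (hdecay : ∀ n, (1 - ‖z (n + K)‖) / (1 - ‖z n‖) ≤ α) :
    ∃ C : ℝ, 0 < C ∧ ∀ r : ℝ, 1 / 2 ≤ r → r < 1 →
      (1 / Real.log (1 / r)) *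
          (∑' n : {n : ℕ | r ≤ ‖z n‖}, Real.log (1 / ‖z (n : ℕ)‖))
        ≤ C * K / (1 - α) := by
  classical
  haveI : NeZero K := ⟨hK.ne'⟩
  set a : ℕ → ℝ := fun n => ‖z n‖ with ha
  have amono : Monotone a := monotone_nat_of_le_succ hmono
  have h1 : ∀ n, 0 < 1 - a n := fun n => by have := hdisc n; simp only [ha]; linarith
  have hstep : ∀ n, 1 - a (n + K) ≤ α * (1 - a n) := fun n =>
    (div_le_iff₀ (h1 n)).mp (hdecay n)
  have hα0 : 0 ≤ α := by
    by_contra h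
    push_neg at h
    have h2 := hstep 0
    have h3 := mul_neg_of_neg_of_pos h (h1 0)
    have h4 := h1 (0 + K)
    linarith
  have h1α : 0 < 1 - α := by linarith
  -- key geometric decay along multiples of K
  have keyA : ∀ n j, 1 - a (n + j * K) ≤ α ^ j * (1 - a n) := by
    intro n j
    induction j with
    | zero => simp
    | succ j ih =>
      have : n + (j + 1) * K = (n + j * K) + K := by ring
      rw [this]
      calc 1 - a (n + j * K + K) ≤ α * (1 - a (n + j * K)) := hstep _
        _ ≤ α * (α ^ j * (1 - a n)) := by
            apply mul_le_mul_of_nonneg_left ih hα0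
        _ = α ^ (j + 1) * (1 - a n) := by ring
  have keyB : ∀ n m, 1 - a (n + m) ≤ α ^ (m / K) * (1 - a n) := by
    intro n m
    have h2 : n + (m / K) * K ≤ n + m := by
      have := Nat.div_mul_le_self m K; omega
    calc 1 - a (n + m) ≤ 1 - a (n + (m / K) * K) := by
          have := amono h2; linarith
      _ ≤ α ^ (m / K) * (1 - a n) := keyA n (m / K)
  -- summability and value of ∑ α^(m/K)
  have hgsum : Summable (fun m : ℕ => α ^ (m / K)) := by
    have hF : Summable (fun p : ℕ × Fin K => α ^ p.1 * (1 : ℝ)) :=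
      Summable.mul_of_nonneg (f := fun j : ℕ => α ^ j) (g := fun _ : Fin K => (1 : ℝ))
        (summable_geometric_of_lt_one hα0 hα) Summable.of_finite
        (fun j => by positivity) (fun i => by norm_num)
    have := ((Nat.divModEquiv K).summable_iff (f := fun p : ℕ × Fin K => α ^ p.1 * 1)).mpr hF
    simpa [Function.comp_def] using this
  have hgval : ∑' m : ℕ, α ^ (m / K) = K * (1 - α)⁻¹ := by
    have e := Nat.divModEquiv K
    have h1' : ∑' m : ℕ, α ^ (m / K) = ∑' p : ℕ × Fin K, α ^ p.1 := by
      rw [← (Nat.divModEquiv K).tsum_eq (fun p : ℕ × Fin K => α ^ p.1)]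
      rfl
    rw [h1']
    have hFsum : Summable (fun p : ℕ × Fin K => α ^ p.1) := by
      have := ((Nat.divModEquiv K).summable_iff (f := fun p : ℕ × Fin K => α ^ p.1)).mp
      apply this
      exact hgsum
    rw [Summable.tsum_prod hFsum]
    have : ∀ j : ℕ, ∑' _ : Fin K, α ^ j = (K : ℝ) * α ^ j := by
      intro j
      rw [tsum_fintype]
      simp [Finset.sum_const, nsmul_eq_mul]
    simp_rw [this]
    rw [tsum_mul_left, tsum_geometric_of_lt_one hα0 hα]
  refine ⟨2, by norm_num, fun r hr hr1 => ?_⟩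
  have hL : 0 < Real.log (1 / r) := by
    apply Real.log_pos
    rw [lt_div_iff₀ (by linarith)]
    linarith
  have hrL : 1 - r ≤ Real.log (1 / r) := by
    have := Real.log_le_sub_one_of_pos (show (0:ℝ) < r by linarith)
    rw [one_div, Real.log_inv]
    linarith
  by_cases hex : ∃ n, r ≤ a n
  · set n0 := Nat.find hex with hn0
    have hn0spec : r ≤ a n0 := Nat.find_spec hex
    have hSeq : {n : ℕ | r ≤ ‖z n‖} = Set.Ici n0 := by
      ext n
      simp only [Set.mem_setOf_eq, Set.mem_Ici]
      constructor
      · intro h; exact Nat.find_min' hex h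
      · intro h; exact le_trans hn0spec (amono h)
    -- per-term bound for n ≥ n0
    have hterm : ∀ m : ℕ, Real.log (1 / a (n0 + m)) ≤ 2 * (1 - a n0) * α ^ (m / K) := by
      intro m
      have hpos : (0:ℝ) < a (n0 + m) := lt_of_lt_of_le (by linarith) (le_trans hn0spec (amono (Nat.le_add_right _ _)))
      have hge : 1/2 ≤ a (n0 + m) := le_trans hr (le_trans hn0spec (amono (Nat.le_add_right _ _)))
      have h2 : Real.log (1 / a (n0 + m)) ≤ 1 / a (n0 + m) - 1 :=
        Real.log_le_sub_one_of_pos (by positivity)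
      have h3 : 1 / a (n0 + m) - 1 ≤ 2 * (1 - a (n0 + m)) := by
        rw [div_sub_one hpos.ne', div_le_iff₀ hpos]
        nlinarith [h1 (n0 + m)]
      have h4 : 1 - a (n0 + m) ≤ α ^ (m / K) * (1 - a n0) := keyB n0 m
      calc Real.log (1 / a (n0 + m)) ≤ 2 * (1 - a (n0 + m)) := by linarith
        _ ≤ 2 * (α ^ (m / K) * (1 - a n0)) := by linarith
        _ = 2 * (1 - a n0) * α ^ (m / K) := by ring
    have hlognn : ∀ m : ℕ, 0 ≤ Real.log (1 / a (n0 + m)) := by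
      intro m
      apply Real.log_nonneg
      have := hdisc (n0 + m)
      have hpos : (0:ℝ) < a (n0 + m) := lt_of_lt_of_le (by linarith) (le_trans hn0spec (amono (Nat.le_add_right _ _)))
      rw [le_div_iff₀ hpos]
      simpa [ha] using (hdisc (n0 + m)).le
    have hGsum : Summable (fun m : ℕ => 2 * (1 - a n0) * α ^ (m / K)) := hgsum.mul_left _
    have hfsum : Summable (fun m : ℕ => Real.log (1 / a (n0 + m))) :=
      Summable.of_nonneg_of_le hlognn hterm hGsum
    -- rewrite tsum over the subtype as a shifted tsum
    have htsum_eq : (∑' n : {n : ℕ | r ≤ ‖z n‖}, Real.log (1 / ‖z (n : ℕ)‖))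
        = ∑' m : ℕ, Real.log (1 / a (n0 + m)) := by
      rw [hSeq]
      exact (Equiv.tsum_eq
        ({ toFun := fun m => ⟨n0 + m, Nat.le_add_right _ _⟩
           invFun := fun x => x.1 - n0
           left_inv := fun m => by simp
           right_inv := fun x => by
             have hx := x.2
             simp only [Set.mem_Ici] at hx
             exact Subtype.ext (by simp; omega) } : ℕ ≃ (Set.Ici n0 : Set ℕ))
        (fun x : (Set.Ici n0 : Set ℕ) => Real.log (1 / ‖z (x : ℕ)‖))).symm
    rw [htsum_eq]
    have hbound : ∑' m : ℕ, Real.log (1 / a (n0 + m)) ≤ 2 * (1 - a n0) * ((K : ℝ) * (1 - α)⁻¹) := by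
      calc ∑' m : ℕ, Real.log (1 / a (n0 + m))
          ≤ ∑' m : ℕ, 2 * (1 - a n0) * α ^ (m / K) := Summable.tsum_le_tsum hterm hfsum hGsum
        _ = 2 * (1 - a n0) * ∑' m : ℕ, α ^ (m / K) := tsum_mul_left
        _ = 2 * (1 - a n0) * ((K : ℝ) * (1 - α)⁻¹) := by rw [hgval]
    have hfin : 1 - a n0 ≤ Real.log (1 / r) := le_trans (by linarith) hrL
    have hfinal : ∑' m : ℕ, Real.log (1 / a (n0 + m))
        ≤ Real.log (1 / r) * (2 * (K : ℝ) / (1 - α)) := by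
      have key := mul_le_mul_of_nonneg_right hfin
        (show (0:ℝ) ≤ 2 * (K : ℝ) * (1 - α)⁻¹ by positivity)
      rw [div_eq_mul_inv]
      calc ∑' m : ℕ, Real.log (1 / a (n0 + m))
          ≤ 2 * (1 - a n0) * ((K : ℝ) * (1 - α)⁻¹) := hbound
        _ = (1 - a n0) * (2 * (K : ℝ) * (1 - α)⁻¹) := by ring
        _ ≤ Real.log (1 / r) * (2 * (K : ℝ) * (1 - α)⁻¹) := key
        _ = Real.log (1 / r) * (2 * (K : ℝ) * (1 - α)⁻¹) := rfl
    calc (1 / Real.log (1 / r)) * (∑' m : ℕ, Real.log (1 / a (n0 + m)))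
        ≤ (1 / Real.log (1 / r)) * (Real.log (1 / r) * (2 * (K : ℝ) / (1 - α))) :=
          mul_le_mul_of_nonneg_left hfinal (by positivity)
      _ = 2 * (K : ℝ) / (1 - α) := by
          rw [one_div, inv_mul_cancel_left₀ hL.ne']
  · push_neg at hex
    have hempty : {n : ℕ | r ≤ ‖z n‖} = (∅ : Set ℕ) := by
      ext n; simp only [Set.mem_setOf_eq, Set.mem_empty_iff_false, iff_false, not_le]
      exact hex n
    rw [hempty]
    rw [tsum_empty, mul_zero]
    positivity
end

section
/- Let (z_n) be a Blaschke sequence. Define T(r) = #{n : |z_n| ≤ r} + (1/log r)·∑_{n : |z_n| ≥ r} log|z_n| for 0 < r < 1. Suppose there is M > 0 such that |T(1-2^{-N-1}) - T(1-2^{-N})| ≤ M for all N ≥ 1. Then there is a constant C such that for all sufficiently large N, #{n : 1-2^{-N} ≤ |z_n| ≤ 1-2^{-N-1}} ≤ C. -/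
open Real Set

/-- Weight function: each index `n` contributes `1` if `a n ≤ r`, plus
`log (a n) / log r` if `r ≤ a n` (so a point exactly at radius `r` counts twice). -/
private noncomputable def Wt (a : ℕ → ℝ) (r : ℝ) (n : ℕ) : ℝ :=
  (if a n ≤ r then 1 else 0) + (if r ≤ a n then Real.log (a n) / Real.log r else 0)

private lemma aux_div_flip {x y d : ℝ} (hd : d < 0) (h : x ≤ y) : y / d ≤ x / d := by
  rw [div_eq_mul_inv, div_eq_mul_inv]
  exact mul_le_mul_of_nonpos_right h (inv_nonpos.mpr hd.le)

private lemma aux_div_nonneg {x d : ℝ} (hx : x ≤ 0) (hd : d < 0) : 0 ≤ x / d := by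
  have h := div_nonneg (neg_nonneg.mpr hx) (neg_nonneg.mpr hd.le)
  rwa [neg_div_neg_eq] at h

/-- summability of the weights -/
private lemma sumWt {a : ℕ → ℝ}
    (hfin : ∀ r : ℝ, r < 1 → {n : ℕ | a n ≤ r}.Finite)
    (hlog : Summable fun n => Real.log (a n))
    {r : ℝ} (h0 : 0 < r) (h1 : r < 1) : Summable (Wt a r) := by
  have hlr : Real.log r < 0 := Real.log_neg h0 h1
  apply Summable.add
  · exact summable_of_ne_finset_zero (s := (hfin r h1).toFinset)
      (fun n hn => if_neg (by simpa [Set.Finite.mem_toFinset] using hn))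
  · apply Summable.of_norm_bounded
      (hlog.abs.mul_right |Real.log r|⁻¹)
    intro n
    by_cases h : r ≤ a n
    · simp [h, Real.norm_eq_abs, abs_div, div_eq_mul_inv]
    · simp only [h, if_false, norm_zero]
      positivity

/-- The key comparison: the increment of `T` over a window `[u, v]` dominates
`c` times the number of points in the annulus `[s, v]`, up to the number of points
sitting exactly at `u`. -/
private lemma key_est {a : ℕ → ℝ} (ha1 : ∀ n, a n < 1)
    (hfin : ∀ r : ℝ, r < 1 → {n : ℕ | a n ≤ r}.Finite)
    (hlog : Summable fun n => Real.log (a n))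
    {T : ℝ → ℝ}
    (hT : ∀ r : ℝ, 0 < r → r < 1 → T r = ∑' n, Wt a r n)
    {u s v c : ℝ} (hu : 0 < u) (hus : u < s) (hsv : s ≤ v) (hv : v < 1)
    (hc1 : s < v → c ≤ 1 - Real.log s / Real.log u)
    (hc2 : c ≤ 2 - Real.log v / Real.log u) :
    c * ({n : ℕ | s ≤ a n ∧ a n ≤ v}.ncard : ℝ) ≤
      (T v - T u) + ({n : ℕ | a n = u}.ncard : ℝ) := by
  classical
  have huv : u < v := lt_of_lt_of_le hus hsv
  have hu1 : u < 1 := lt_trans huv hv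
  have hv0 : 0 < v := lt_trans hu huv
  have hs0 : 0 < s := lt_trans hu hus
  have hlu : Real.log u < 0 := Real.log_neg hu hu1
  have hlv : Real.log v < 0 := Real.log_neg hv0 hv
  have hGfin := hfin v hv
  set G := hGfin.toFinset with hG
  have hmemG : ∀ n, n ∈ G ↔ a n ≤ v := fun n => hGfin.mem_toFinset
  have hSv : Summable (Wt a v) := sumWt hfin hlog hv0 hv
  have hSu : Summable (Wt a u) := sumWt hfin hlog hu hu1
  have hdiff : T v - T u = ∑' n, (Wt a v n - Wt a u n) := by
    rw [hT v hv0 hv, hT u hu hu1, hSv.tsum_sub hSu]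
  -- off `G` the increments are nonnegative
  have hoff : ∀ n ∉ G, 0 ≤ Wt a v n - Wt a u n := by
    intro n hn
    have h1 : v < a n := not_le.mp (by simpa [hmemG] using hn)
    have h2 : u ≤ a n := (lt_trans huv h1).le
    have h0an : 0 < a n := lt_trans hv0 h1
    have hla : Real.log (a n) ≤ 0 := Real.log_nonpos h0an.le (ha1 n).le
    have hmono : Real.log (a n) / Real.log u ≤ Real.log (a n) / Real.log v := by
      rw [div_eq_mul_inv, div_eq_mul_inv]
      exact mul_le_mul_of_nonpos_left
        ((inv_le_inv_of_neg hlv hlu).mpr (Real.log_le_log hu huv.le)) hla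
    simp only [Wt, if_neg (not_le.mpr h1), if_neg (not_le.mpr (lt_trans huv h1)),
      if_pos h2, if_pos h1.le, zero_add]
    linarith
  have hlower : ∑ n ∈ G, (Wt a v n - Wt a u n) ≤ T v - T u := by
    rw [hdiff]
    exact Summable.sum_le_tsum G hoff (hSv.sub hSu)
  -- pointwise lower bound on `G`
  have hpt : ∀ n ∈ G, (if a n = u then (-1:ℝ) else 0)
      + (if s ≤ a n ∧ a n ≤ v then c else 0) ≤ Wt a v n - Wt a u n := by
    intro n hnG
    have hnv : a n ≤ v := (hmemG n).mp hnG
    rcases lt_trichotomy (a n) u with h | h | h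
    · rw [if_neg (ne_of_lt h), if_neg (by push_neg; intro hs; linarith)]
      simp [Wt, if_pos hnv, if_pos h.le, if_neg (not_le.mpr h),
        if_neg (not_le.mpr (lt_trans h huv))]
    · rw [if_pos h, if_neg (by push_neg; intro hs; linarith)]
      have e1 : Wt a u n = 2 := by
        simp only [Wt, h]
        rw [if_pos le_rfl, if_pos le_rfl, div_self hlu.ne]
        norm_num
      have hlt : a n < v := by rw [h]; exact huv
      have e2 : Wt a v n = 1 := by
        simp only [Wt]
        rw [if_pos hnv, if_neg (not_le.mpr hlt), add_zero]
      rw [e1, e2]; norm_num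
    · -- u < a n ≤ v
      have h0an : 0 < a n := lt_trans hu h
      have hla : Real.log (a n) < 0 := Real.log_neg h0an (ha1 n)
      have hifu : Wt a u n = Real.log (a n) / Real.log u := by
        simp [Wt, if_neg (not_le.mpr h), h.le]
      have hrat0 : 0 ≤ Real.log (a n) / Real.log u := aux_div_nonneg hla.le hlu
      have hrat1 : Real.log (a n) / Real.log u ≤ 1 := by
        have h1 : Real.log u ≤ Real.log (a n) := Real.log_le_log hu h.le
        calc Real.log (a n) / Real.log u ≤ Real.log u / Real.log u :=
              aux_div_flip hlu h1
          _ = 1 := div_self hlu.ne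
      rw [if_neg (ne_of_gt h), hifu]
      rcases eq_or_lt_of_le hnv with hveq | hvlt
      · have e2 : Wt a v n = 2 := by
          simp only [Wt, hveq]
          rw [if_pos le_rfl, if_pos le_rfl, div_self hlv.ne]
          norm_num
        rw [e2, if_pos ⟨hveq ▸ hsv, hnv⟩]
        have : Real.log (a n) = Real.log v := by rw [hveq]
        rw [this]
        linarith
      · have e2 : Wt a v n = 1 := by
          simp only [Wt]
          rw [if_pos hnv, if_neg (not_le.mpr hvlt), add_zero]
        rw [e2]
        by_cases hsa : s ≤ a n
        · rw [if_pos ⟨hsa, hnv⟩]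
          have hc := hc1 (lt_of_le_of_lt hsa hvlt)
          have h1 : Real.log s ≤ Real.log (a n) := Real.log_le_log hs0 hsa
          have h2 := aux_div_flip hlu h1
          linarith
        · rw [if_neg (by tauto)]
          linarith
  have hsum_le : ∑ n ∈ G, ((if a n = u then (-1:ℝ) else 0)
      + (if s ≤ a n ∧ a n ≤ v then c else 0))
      ≤ ∑ n ∈ G, (Wt a v n - Wt a u n) := Finset.sum_le_sum hpt
  -- identify the left-hand sum with the cardinalities
  have e1 : {n : ℕ | a n = u} = ↑(G.filter fun n => a n = u) := by
    ext n
    simp only [Finset.coe_filter, Set.mem_setOf_eq, hmemG]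
    exact ⟨fun hn => ⟨hn ▸ huv.le, hn⟩, fun hn => hn.2⟩
  have e2 : {n : ℕ | s ≤ a n ∧ a n ≤ v} = ↑(G.filter fun n => s ≤ a n ∧ a n ≤ v) := by
    ext n
    simp only [Finset.coe_filter, Set.mem_setOf_eq, hmemG]
    exact ⟨fun hn => ⟨hn.2, hn⟩, fun hn => hn.2⟩
  have hcalc : ∑ n ∈ G, ((if a n = u then (-1:ℝ) else 0)
      + (if s ≤ a n ∧ a n ≤ v then c else 0))
      = -({n : ℕ | a n = u}.ncard : ℝ)
        + c * ({n : ℕ | s ≤ a n ∧ a n ≤ v}.ncard : ℝ) := by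
    rw [Finset.sum_add_distrib, e1, e2, Set.ncard_coe_finset, Set.ncard_coe_finset,
      ← Finset.sum_filter, ← Finset.sum_filter, Finset.sum_const, Finset.sum_const]
    simp [mul_comm]
  linarith [hsum_le.trans hlower, hcalc]

/-- `log (1 - x/2) / log (1 - x) ≤ 2/3` for `0 < x ≤ 1/2`. -/
private lemma ratio_bound {x : ℝ} (hx0 : 0 < x) (hx : x ≤ 1/2) :
    Real.log (1 - x/2) / Real.log (1 - x) ≤ 2/3 := by
  have h1 : Real.log (1 - x) ≤ -x := by
    have := Real.log_le_sub_one_of_pos (show (0:ℝ) < 1 - x by linarith)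
    linarith
  have h3 : (0:ℝ) < 1 - x/2 := by linarith
  have h2 : 1 - (1 - x/2)⁻¹ ≤ Real.log (1 - x/2) := Real.one_sub_inv_le_log_of_pos h3
  have h4 : (1 - x/2) * (1 - x/2)⁻¹ = 1 := mul_inv_cancel₀ h3.ne'
  have hq : (1 - x/2)⁻¹ - 1 ≤ (2/3)*x := by nlinarith [h4, hx0, hx]
  have hApos : (0:ℝ) < -Real.log (1 - x) := by linarith
  have hB : -Real.log (1 - x/2) ≤ (2/3)*x := by linarith
  have e : Real.log (1 - x/2) / Real.log (1 - x)
      = (-Real.log (1 - x/2)) / (-Real.log (1 - x)) := by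
    rw [neg_div_neg_eq]
  rw [e, div_le_iff₀ hApos]
  nlinarith [hB, hApos, hx0]

/-- If the counting function `T` of a Blaschke sequence has bounded dyadic increments,
then the number of zeros in each dyadic annulus is eventually bounded. -/
theorem dyadic_annulus_count_bounded_of_T_increments_bounded
    (z : ℕ → ℂ)
    (hdisc : ∀ n, ‖z n‖ < 1)
    (hsum : Summable (fun n => 1 - ‖z n‖))
    (T : ℝ → ℝ)
    (hT : ∀ r : ℝ, 0 < r → r < 1 →
      T r = (({n : ℕ | ‖z n‖ ≤ r}.ncard : ℝ)
        + (1 / Real.log r) *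
          ∑' n : {n : ℕ | r ≤ ‖z n‖}, Real.log (‖z (n : ℕ)‖)))
    (M : ℝ) (hM : 0 < M)
    (hincr : ∀ N : ℕ, 1 ≤ N →
      |T (1 - (2:ℝ) ^ (-(N:ℤ) - 1)) - T (1 - (2:ℝ) ^ (-(N:ℤ)))| ≤ M) :
    ∃ C : ℝ, ∃ N₀ : ℕ, ∀ N : ℕ, N₀ ≤ N →
      (({n : ℕ | 1 - (2:ℝ) ^ (-(N:ℤ)) ≤ ‖z n‖ ∧
          ‖z n‖ ≤ 1 - (2:ℝ) ^ (-(N:ℤ) - 1)}.ncard : ℝ)) ≤ C := by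
  classical
  set a : ℕ → ℝ := fun n => ‖z n‖ with ha
  have ha0 : ∀ n, 0 ≤ a n := fun n => norm_nonneg (z n)
  have ha1 : ∀ n, a n < 1 := hdisc
  -- finiteness of sublevel sets
  have hfin : ∀ r : ℝ, r < 1 → {n : ℕ | a n ≤ r}.Finite := by
    intro r hr
    have hmem : (fun n => 1 - a n) ⁻¹' (Set.Iio (1 - r)) ∈ Filter.cofinite :=
      hsum.tendsto_cofinite_zero (Iio_mem_nhds (by linarith : (0:ℝ) < 1 - r))
    have hfin' := Filter.mem_cofinite.mp hmem
    apply hfin'.subset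
    intro n hn
    simp only [Set.mem_compl_iff, Set.mem_preimage, Set.mem_Iio, not_lt]
    have : a n ≤ r := hn
    linarith
  -- summability of the logs
  have hlog : Summable fun n => Real.log (a n) := by
    apply Summable.of_norm_bounded_eventually (hsum.mul_left 2)
    have hmem : (fun n => 1 - a n) ⁻¹' (Set.Iio (1/2)) ∈ Filter.cofinite :=
      hsum.tendsto_cofinite_zero (Iio_mem_nhds (by norm_num))
    filter_upwards [hmem] with n hn
    have h1 : (1/2:ℝ) < a n := by
      simp only [Set.mem_preimage, Set.mem_Iio] at hn
      linarith
    have h0 : (0:ℝ) < a n := by linarith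
    have h2 : Real.log (a n) ≤ 0 := Real.log_nonpos h0.le (ha1 n).le
    rw [Real.norm_eq_abs, abs_of_nonpos h2]
    have h3 := Real.one_sub_inv_le_log_of_pos h0
    have h4 : a n * (a n)⁻¹ = 1 := mul_inv_cancel₀ h0.ne'
    nlinarith [h3, h4, ha1 n]
  -- T in weight form
  have hT' : ∀ r : ℝ, 0 < r → r < 1 → T r = ∑' n, Wt a r n := by
    intro r h0 h1
    have hlr : Real.log r < 0 := Real.log_neg h0 h1
    have hF := hfin r h1
    have hs1 : Summable (fun n => if a n ≤ r then (1:ℝ) else 0) :=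
      summable_of_ne_finset_zero (s := hF.toFinset)
        (fun n hn => if_neg (by simpa [Set.Finite.mem_toFinset] using hn))
    have hs2 : Summable (fun n => if r ≤ a n then Real.log (a n) else 0) := by
      apply Summable.of_norm_bounded hlog.abs
      intro n
      by_cases h : r ≤ a n <;> simp [h, Real.norm_eq_abs]
    have e1 : ({n : ℕ | a n ≤ r}.ncard : ℝ) = ∑' n, (if a n ≤ r then (1:ℝ) else 0) := by
      rw [tsum_eq_sum (s := hF.toFinset)
        (fun n hn => if_neg (by simpa [Set.Finite.mem_toFinset] using hn)),
        Set.ncard_eq_toFinset_card _ hF]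
      rw [Finset.sum_congr rfl
        (fun n hn => if_pos (show a n ≤ r from hF.mem_toFinset.mp hn))]
      simp
    have e2 : ∑' (n : {n : ℕ | r ≤ a n}), Real.log (a (n : ℕ))
        = ∑' n, (if r ≤ a n then Real.log (a n) else 0) := by
      have := tsum_subtype {n : ℕ | r ≤ a n} (fun n => Real.log (a n))
      rw [this]
      exact tsum_congr fun n => by
        by_cases h : r ≤ a n <;> simp [Set.indicator, h]
    rw [hT r h0 h1, e1, e2, ← tsum_mul_left, ← Summable.tsum_add hs1 (hs2.mul_left _)]
    apply tsum_congr
    intro n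
    by_cases h : r ≤ a n <;> by_cases h' : a n ≤ r <;>
      simp [Wt, h, h', div_eq_mul_inv, mul_comm]
  -- dyadic radii
  set R : ℕ → ℝ := fun N => 1 - (2:ℝ) ^ (-(N:ℤ)) with hR
  have hxle : ∀ N : ℕ, 1 ≤ N → (2:ℝ) ^ (-(N:ℤ)) ≤ 1/2 := by
    intro N hN
    have : (2:ℝ) ^ (-(N:ℤ)) ≤ (2:ℝ) ^ (-1 : ℤ) :=
      zpow_le_zpow_right₀ one_le_two (by omega)
    simpa using this
  have hxpos : ∀ N : ℕ, (0:ℝ) < (2:ℝ) ^ (-(N:ℤ)) := fun N => by positivity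
  have hRpos : ∀ N : ℕ, 1 ≤ N → (0:ℝ) < R N := by
    intro N hN
    have := hxle N hN
    simp only [hR]
    linarith
  have hRlt1 : ∀ N : ℕ, R N < 1 := by
    intro N
    have := hxpos N
    simp only [hR]
    linarith
  have hhalf : ∀ N : ℕ, (2:ℝ) ^ (-((N+1:ℕ)):ℤ) = (2:ℝ) ^ (-(N:ℤ)) / 2 := by
    intro N
    have : (-((N+1:ℕ)):ℤ) = -(N:ℤ) - 1 := by push_cast; ring
    rw [this, zpow_sub₀ (two_ne_zero), zpow_one]
  have hRmono : ∀ N : ℕ, R N < R (N+1) := by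
    intro N
    have h := hhalf N
    have := hxpos N
    simp only [hR]
    rw [h]
    linarith
  have hratio : ∀ N : ℕ, 1 ≤ N → Real.log (R (N+1)) / Real.log (R N) ≤ 2/3 := by
    intro N hN
    have h := ratio_bound (hxpos N) (hxle N hN)
    have e : R (N+1) = 1 - (2:ℝ) ^ (-(N:ℤ)) / 2 := by
      simp only [hR]
      rw [hhalf N]
    rw [e]
    exact h
  have hratio1 : ∀ {p q : ℕ}, 1 ≤ p → p ≤ q →
      Real.log (R q) / Real.log (R p) ≤ 1 := by
    intro p q hp hpq
    have hlp : Real.log (R p) < 0 := Real.log_neg (hRpos p hp) (hRlt1 p)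
    have hmono : R p ≤ R q := by
      clear hratio
      induction q, hpq using Nat.le_induction with
      | base => exact le_refl _
      | succ q hq ih => exact ih.trans (hRmono q).le
    have h1 : Real.log (R p) ≤ Real.log (R q) := Real.log_le_log (hRpos p hp) hmono
    calc Real.log (R q) / Real.log (R p) ≤ Real.log (R p) / Real.log (R p) :=
        aux_div_flip hlp h1
      _ = 1 := div_self hlp.ne
  -- reformulated increment bound
  have hstep : ∀ N : ℕ, 1 ≤ N → |T (R (N+1)) - T (R N)| ≤ M := by
    intro N hN
    have h := hincr N hN
    have e : (1 : ℝ) - (2:ℝ) ^ (-(N:ℤ) - 1) = R (N+1) := by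
      simp only [hR]
      congr 1
      rw [zpow_sub₀ (two_ne_zero), zpow_one, ← hhalf N]
    rwa [e] at h
  -- boundary counts
  set D : ℕ → ℝ := fun N => ({n : ℕ | a n = R N}.ncard : ℝ) with hD
  have hDrec : ∀ N : ℕ, 1 ≤ N → (4/3) * D (N+1) ≤ M + D N := by
    intro N hN
    have hrat := hratio N hN
    have h := key_est ha1 hfin hlog hT' (hRpos N hN) (hRmono N) (le_refl (R (N+1)))
      (hRlt1 (N+1)) (c := 4/3) (fun h => absurd h (lt_irrefl _)) (by linarith)
    have hset : {n : ℕ | R (N+1) ≤ a n ∧ a n ≤ R (N+1)} = {n : ℕ | a n = R (N+1)} := by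
      ext n
      simp only [Set.mem_setOf_eq]
      constructor
      · rintro ⟨h1, h2⟩; exact le_antisymm h2 h1
      · rintro h1; exact ⟨h1.ge, h1.le⟩
    rw [hset] at h
    have ht := abs_le.mp (hstep N hN)
    simp only [hD]
    linarith [h]
  set K : ℝ := max (D 1) (3*M) with hK
  have hDK : ∀ N : ℕ, 1 ≤ N → D N ≤ K := by
    intro N hN
    induction N, hN using Nat.le_induction with
    | base => exact le_max_left _ _
    | succ N hN ih =>
      have h := hDrec N hN
      have h2 : 3*M ≤ K := le_max_right _ _
      linarith
  -- final bound
  refine ⟨6*M + 3*K, 2, ?_⟩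
  intro N hN
  obtain ⟨k, rfl⟩ : ∃ k, N = k + 2 := ⟨N - 2, by omega⟩
  have hrat := hratio (k+1) (by omega)
  have hrat2 : Real.log (R (k+3)) / Real.log (R (k+1)) ≤ 1 :=
    hratio1 (by omega) (by omega)
  have h := key_est ha1 hfin hlog hT' (hRpos (k+1) (by omega)) (hRmono (k+1))
    (hRmono (k+2)).le (hRlt1 (k+3)) (c := 1/3)
    (fun _ => by linarith) (by linarith)
  have ht1 := abs_le.mp (hstep (k+1) (by omega))
  have ht2 := abs_le.mp (hstep (k+2) (by omega))
  have hDb := hDK (k+1) (by omega)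
  have e : (2:ℝ) ^ (-(((k+2:ℕ)):ℤ) - 1) = (2:ℝ) ^ (-(((k+3:ℕ)):ℤ)) := by
    congr 1
  rw [e]
  have hgoal : {n : ℕ | 1 - (2:ℝ) ^ (-(((k+2:ℕ)):ℤ)) ≤ ‖z n‖ ∧
      ‖z n‖ ≤ 1 - (2:ℝ) ^ (-(((k+3:ℕ)):ℤ))}
      = {n : ℕ | R (k+2) ≤ a n ∧ a n ≤ R (k+3)} := rfl
  rw [hgoal]
  simp only [hD] at hDb
  linarith [h, ht1.2, ht2.2, hDb]
end
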